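/- arXiv:2204.05003 — 7 statements merged into one kernel-verified Lean document; each statement's English description precedes it below -/
import Mathlib

section
/- Let P be a probability distribution on [0,1] with Lebesgue density, and for n > 1 let t_n(x) be the unique positive solution of t² · P([x−t, x+t]) = (log n)/n. Then the function x ↦ t_n(x) is 1-Lipschitz on [0,1]. -/
/-!
If `t x > t y + |x - y|`, the window `[y - t y, y + t y]` lies inside `[x - t x, x + t x]`, so it
carries no more mass, while its squared half-width is strictly smaller; the two products
`t² · P(window)` then cannot both equal `log n / n > 0`.
-/

open MeasureTheory Set

section SpreadFunction

variable {μ : Measure ℝ} {t : ℝ → ℝ} {c : ℝ}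

lemma Icc_sub_add_subset_Icc_sub_add {x y r s : ℝ} (h : r + |x - y| ≤ s) :
    Icc (y - r) (y + r) ⊆ Icc (x - s) (x + s) := by
  rw [← Real.closedBall_eq_Icc, ← Real.closedBall_eq_Icc]
  exact Metric.closedBall_subset_closedBall' (by rwa [Real.dist_eq, abs_sub_comm])

lemma pos_and_nonneg_of_sq_mul_measure_Icc_eq {y : ℝ} (hc : 0 < c)
    (hy : t y ^ 2 * (μ (Icc (y - t y) (y + t y))).toReal = c) :
    0 < (μ (Icc (y - t y) (y + t y))).toReal ∧ 0 ≤ t y := by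
  have hmass : 0 < (μ (Icc (y - t y) (y + t y))).toReal :=
    lt_of_le_of_ne ENNReal.toReal_nonneg fun h ↦ by rw [← h, mul_zero] at hy; linarith
  obtain ⟨_, hz⟩ := nonempty_of_measure_ne_zero (ENNReal.toReal_pos_iff.mp hmass).1.ne'
  exact ⟨hmass, by linarith [hz.1.trans hz.2]⟩

lemma le_add_abs_sub_of_sq_mul_measure_Icc_eq [IsFiniteMeasure μ] {x y : ℝ} (hc : 0 < c)
    (hx : t x ^ 2 * (μ (Icc (x - t x) (x + t x))).toReal = c)
    (hy : t y ^ 2 * (μ (Icc (y - t y) (y + t y))).toReal = c) :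
    t x ≤ t y + |x - y| := by
  by_contra! hlt
  obtain ⟨hmass_y, hty⟩ := pos_and_nonneg_of_sq_mul_measure_Icc_eq hc hy
  have hmass_le : (μ (Icc (y - t y) (y + t y))).toReal ≤ (μ (Icc (x - t x) (x + t x))).toReal :=
    ENNReal.toReal_mono (measure_ne_top μ _)
      (measure_mono (Icc_sub_add_subset_Icc_sub_add hlt.le))
  have hsq : t y ^ 2 < t x ^ 2 := by nlinarith [abs_nonneg (x - y)]
  nlinarith

lemma abs_sub_le_of_sq_mul_measure_Icc_eq [IsFiniteMeasure μ] {x y : ℝ} (hc : 0 < c)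
    (hx : t x ^ 2 * (μ (Icc (x - t x) (x + t x))).toReal = c)
    (hy : t y ^ 2 * (μ (Icc (y - t y) (y + t y))).toReal = c) :
    |t x - t y| ≤ |x - y| := by
  have hxy := le_add_abs_sub_of_sq_mul_measure_Icc_eq hc hx hy
  have hyx := le_add_abs_sub_of_sq_mul_measure_Icc_eq hc hy hx
  rw [abs_sub_comm y] at hyx
  exact abs_sub_le_iff.mpr ⟨by linarith, by linarith⟩

end SpreadFunction

theorem spread_function_lipschitz_general
    (P : Measure ℝ) [IsProbabilityMeasure P]
    (n : ℕ) (hn : 1 < n) (t : ℝ → ℝ)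
    (ht_eq : ∀ x ∈ Set.Icc (0:ℝ) 1,
      (t x) ^ 2 * (P (Set.Icc (x - t x) (x + t x))).toReal = Real.log n / n) :
    ∀ x ∈ Set.Icc (0:ℝ) 1, ∀ y ∈ Set.Icc (0:ℝ) 1, |t x - t y| ≤ |x - y| := by
  have hc : 0 < Real.log n / n :=
    div_pos (Real.log_pos (by exact_mod_cast hn)) (by positivity)
  intro x hx y hy
  exact abs_sub_le_of_sq_mul_measure_Icc_eq hc (ht_eq x hx) (ht_eq y hy)

/-- The spread function `t_n` is 1-Lipschitz on `[0,1]`. -/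
theorem spread_function_lipschitz
    (P : Measure ℝ) [IsProbabilityMeasure P]
    (hac : P ≪ volume) (hsupp : P (Set.Icc (0:ℝ) 1) = 1)
    (n : ℕ) (hn : 1 < n) (t : ℝ → ℝ)
    (ht_pos : ∀ x ∈ Set.Icc (0:ℝ) 1, 0 < t x)
    (ht_eq : ∀ x ∈ Set.Icc (0:ℝ) 1,
      (t x) ^ 2 * (P (Set.Icc (x - t x) (x + t x))).toReal = Real.log n / n) :
    ∀ x ∈ Set.Icc (0:ℝ) 1, ∀ y ∈ Set.Icc (0:ℝ) 1, |t x - t y| ≤ |x - y| :=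
  spread_function_lipschitz_general P n hn t ht_eq
end

section
/- For real numbers a < b, let E be the set of 1-Lipschitz functions f : ℝ → ℝ with support contained in [a,b]. Then for any r > 0, the r-covering number of E with respect to the sup-norm satisfies log N(r, E, ‖·‖_∞) ≤ ⌊(b−a)/r⌋ · log 3. -/
open Set

/-- Auxiliary piecewise-constant function used to cover the Lipschitz class. -/
noncomputable def coverFun (a r : ℝ) (n : ℕ) (ε : ℕ → ℤ) : ℝ → ℝ := fun x =>
  if x < a + n * r then
    ((∑ j ∈ Finset.range ((⌊(x - a) / r⌋).toNat + 1), ε j : ℤ) : ℝ) * r + r / 2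
  else 0

/-- Covering number bound for 1-Lipschitz functions supported on `[a,b]`:
the class can be covered by at most `3^⌊(b−a)/r⌋` sup-norm balls of radius
`r`, i.e. `log N(r, E, ‖·‖_∞) ≤ ⌊(b−a)/r⌋ · log 3`. -/
theorem covering_number_lipschitz_support
    (a b : ℝ) (hab : a < b) (r : ℝ) (hr : 0 < r) :
    ∃ S : Finset (ℝ → ℝ),
      (S.card : ℝ) ≤ 3 ^ ⌊(b - a) / r⌋₊ ∧
      ∀ f : ℝ → ℝ, LipschitzWith 1 f → tsupport f ⊆ Set.Icc a b →
        ∃ g ∈ S, ∀ x : ℝ, |f x - g x| ≤ r := by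
  classical
  set n := ⌊(b - a) / r⌋₊ with hn
  refine ⟨(Fintype.piFinset fun _ : Fin n => ({-1, 0, 1} : Finset ℤ)).image
      (fun ε => coverFun a r n fun j => if h : j < n then ε ⟨j, h⟩ else 0), ?_, ?_⟩
  · have h1 : ((Fintype.piFinset fun _ : Fin n => ({-1, 0, 1} : Finset ℤ)).image
        (fun ε => coverFun a r n fun j => if h : j < n then ε ⟨j, h⟩ else 0)).card
        ≤ (Fintype.piFinset fun _ : Fin n => ({-1, 0, 1} : Finset ℤ)).card :=
      Finset.card_image_le
    have h2 : (Fintype.piFinset fun _ : Fin n => ({-1, 0, 1} : Finset ℤ)).card = 3 ^ n := by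
      rw [Fintype.card_piFinset]
      simp
    rw [h2] at h1
    exact_mod_cast h1
  · intro f hf hsupp
    have hfd : ∀ x y : ℝ, |f x - f y| ≤ |x - y| := by
      intro x y
      have := hf.dist_le_mul x y
      simpa [Real.dist_eq] using this
    have hzero : ∀ x : ℝ, x < a ∨ b < x → f x = 0 := by
      intro x hx
      apply image_eq_zero_of_notMem_tsupport
      intro hxs
      have := hsupp hxs
      simp only [Set.mem_Icc] at this
      rcases hx with h | h <;> linarith [this.1, this.2]
    have ha0 : f a = 0 := by
      by_contra hne
      have hpos : 0 < |f a| := abs_pos.mpr hne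
      have h1 : f (a - |f a| / 2) = 0 := hzero _ (Or.inl (by linarith))
      have h2 := hfd a (a - |f a| / 2)
      rw [h1, sub_zero] at h2
      have h3 : |a - (a - |f a| / 2)| = |f a| / 2 := by
        rw [show a - (a - |f a| / 2) = |f a| / 2 by ring, abs_of_pos (by linarith)]
      rw [h3] at h2
      linarith
    have hb0 : f b = 0 := by
      by_contra hne
      have hpos : 0 < |f b| := abs_pos.mpr hne
      have h1 : f (b + |f b| / 2) = 0 := hzero _ (Or.inr (by linarith))
      have h2 := hfd b (b + |f b| / 2)
      rw [h1, sub_zero] at h2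
      have h3 : |b - (b + |f b| / 2)| = |f b| / 2 := by
        rw [show b - (b + |f b| / 2) = -(|f b| / 2) by ring, abs_neg,
          abs_of_pos (by linarith)]
      rw [h3] at h2
      linarith
    -- midpoints and quantized values
    set m : ℕ → ℝ := fun i => a + i * r + r / 2 with hm
    set K : ℕ → ℤ := fun i => ⌊f (m i) / r⌋ with hK
    set ε : ℕ → ℤ := fun j => if j = 0 then K 0 else K j - K (j - 1) with he
    have hKdef : ∀ i : ℕ, K i = ⌊f (m i) / r⌋ := fun _ => rfl
    have hmdef : ∀ i : ℕ, m i = a + i * r + r / 2 := fun _ => rfl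
    have hsum : ∀ i : ℕ, (∑ j ∈ Finset.range (i + 1), ε j) = K i := by
      intro i
      induction i with
      | zero => simp [he]
      | succ k ih =>
        rw [Finset.sum_range_succ, ih]
        have : ε (k + 1) = K (k + 1) - K k := by simp [he]
        rw [this]; ring
    have hKbound : ∀ i : ℕ, (K i : ℝ) * r ≤ f (m i) ∧ f (m i) < ((K i : ℝ) + 1) * r := by
      intro i
      constructor
      · have h1 : (K i : ℝ) ≤ f (m i) / r := Int.floor_le _
        calc (K i : ℝ) * r ≤ (f (m i) / r) * r := by nlinarith
          _ = f (m i) := by field_simp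
      · have h2 : f (m i) / r < (K i : ℝ) + 1 := by
          have := Int.lt_floor_add_one (f (m i) / r)
          push_cast at this ⊢
          linarith
        calc f (m i) = (f (m i) / r) * r := by field_simp
          _ < ((K i : ℝ) + 1) * r := by nlinarith
    have hKr : ∀ i : ℕ, |f (m i) - ((K i : ℝ) * r + r / 2)| ≤ r / 2 := by
      intro i
      obtain ⟨h1, h2⟩ := hKbound i
      rw [abs_le]
      constructor <;> nlinarith
    -- each increment is in {-1,0,1}
    have hepsmem : ∀ j : ℕ, ε j ∈ ({-1, 0, 1} : Finset ℤ) := by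
      intro j
      have hmem : ∀ z : ℤ, -1 ≤ z → z ≤ 1 → z ∈ ({-1, 0, 1} : Finset ℤ) := by
        intro z h1 h2
        simp only [Finset.mem_insert, Finset.mem_singleton]
        omega
      cases j with
      | zero =>
        have h0 : ε 0 = K 0 := by simp [he]
        have hfm : |f (m 0)| ≤ r / 2 := by
          have := hfd (m 0) a
          rw [ha0, sub_zero] at this
          have hd : |m 0 - a| = r / 2 := by
            have h4 : m 0 - a = r / 2 := by rw [hmdef]; push_cast; ring
            rw [h4, abs_of_pos (by linarith)]
          rw [hd] at this
          exact this
        rw [h0]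
        apply hmem
        · rw [hKdef]
          apply Int.le_floor.mpr
          push_cast
          rw [le_div_iff₀ hr]
          have := abs_le.mp hfm
          nlinarith [this.1]
        · rw [hKdef]
          have : (⌊f (m 0) / r⌋ : ℤ) < 2 := by
            apply Int.floor_lt.mpr
            push_cast
            rw [div_lt_iff₀ hr]
            have := abs_le.mp hfm
            nlinarith [this.2]
          omega
      | succ k =>
        have h0 : ε (k + 1) = K (k + 1) - K k := by simp [he]
        have hstep : |f (m (k + 1)) - f (m k)| ≤ r := by
          have := hfd (m (k + 1)) (m k)
          have hd : |m (k + 1) - m k| = r := by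
            have h4 : m (k + 1) - m k = r := by rw [hmdef, hmdef]; push_cast; ring
            rw [h4, abs_of_pos hr]
          rw [hd] at this
          exact this
        obtain ⟨hs1, hs2⟩ := abs_le.mp hstep
        rw [h0]
        have hup : K (k + 1) ≤ K k + 1 := by
          rw [hKdef, hKdef]
          have : f (m (k + 1)) / r ≤ f (m k) / r + 1 := by
            rw [div_add' _ _ _ hr.ne', div_le_div_iff₀ hr hr]
            nlinarith
          calc ⌊f (m (k + 1)) / r⌋ ≤ ⌊f (m k) / r + 1⌋ := Int.floor_le_floor this
            _ = ⌊f (m k) / r⌋ + 1 := by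
              rw [show f (m k) / r + 1 = f (m k) / r + (1 : ℤ) by push_cast; ring,
                Int.floor_add_intCast]
        have hdown : K k - 1 ≤ K (k + 1) := by
          rw [hKdef, hKdef]
          have : f (m k) / r - 1 ≤ f (m (k + 1)) / r := by
            rw [div_sub' hr.ne', div_le_div_iff₀ hr hr]
            nlinarith
          have h4 : ⌊f (m k) / r - 1⌋ ≤ ⌊f (m (k + 1)) / r⌋ := Int.floor_le_floor this
          have h5 : ⌊f (m k) / r - 1⌋ = ⌊f (m k) / r⌋ - 1 := by
            rw [show f (m k) / r - 1 = f (m k) / r + (-1 : ℤ) by push_cast; ring,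
              Int.floor_add_intCast]
            ring
          omega
        apply hmem <;> omega
    -- the chosen covering function
    refine ⟨coverFun a r n fun j => if h : j < n then ε j else 0, ?_, ?_⟩
    · apply Finset.mem_image.mpr
      refine ⟨fun j : Fin n => ε j, ?_, ?_⟩
      · rw [Fintype.mem_piFinset]
        intro j
        exact hepsmem j
      · rfl
    · intro x
      by_cases hx : x < a + n * r
      · -- inside the grid
        rw [coverFun, if_pos hx]
        rcases Nat.eq_zero_or_pos n with hn0 | hn1
        · -- degenerate case n = 0 : then x < a
          have hxa : x < a := by
            rw [hn0] at hx
            push_cast at hx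
            linarith
          have hfx : f x = 0 := hzero x (Or.inl hxa)
          have hi0 : (⌊(x - a) / r⌋).toNat = 0 := by
            apply Int.toNat_of_nonpos
            apply le_of_lt
            apply Int.floor_lt.mpr
            push_cast
            rw [div_lt_iff₀ hr]
            nlinarith
          rw [hi0]
          have : (∑ j ∈ Finset.range (0 + 1), (if h : j < n then ε j else 0)) = 0 := by
            rw [hn0]
            simp
          rw [this]
          push_cast
          rw [hfx]
          rw [show (0 : ℝ) - (0 * r + r / 2) = -(r / 2) by ring, abs_neg,
            abs_of_pos (by linarith)]
          linarith
        · -- main case n ≥ 1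
          set i := (⌊(x - a) / r⌋).toNat with hi
          have hilt : i < n := by
            by_cases hxa : x < a
            · have : ⌊(x - a) / r⌋ < 0 := by
                apply Int.floor_lt.mpr
                push_cast
                rw [div_lt_iff₀ hr]
                nlinarith
              have : i = 0 := by
                rw [hi]; exact Int.toNat_of_nonpos this.le
              omega
            · push_neg at hxa
              have hfl : ⌊(x - a) / r⌋ < (n : ℤ) := by
                apply Int.floor_lt.mpr
                push_cast
                rw [div_lt_iff₀ hr]
                linarith
              have hnn : 0 ≤ ⌊(x - a) / r⌋ := by
                apply Int.floor_nonneg.mpr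
                exact div_nonneg (by linarith) hr.le
              omega
          have hsum' : (∑ j ∈ Finset.range (i + 1), (if h : j < n then ε j else 0)) = K i := by
            rw [← hsum i]
            apply Finset.sum_congr rfl
            intro j hj
            rw [dif_pos]
            have := Finset.mem_range.mp hj
            omega
          rw [hsum']
          -- the point x' = max x a satisfies f x = f x' and |x' - m i| ≤ r/2
          have key : ∃ x' : ℝ, f x = f x' ∧ |x' - m i| ≤ r / 2 := by
            by_cases hxa : x < a
            · refine ⟨a, by rw [hzero x (Or.inl hxa), ha0], ?_⟩
              have hi0 : i = 0 := by
                rw [hi]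
                apply Int.toNat_of_nonpos
                apply le_of_lt
                apply Int.floor_lt.mpr
                push_cast
                rw [div_lt_iff₀ hr]
                nlinarith
              rw [hi0]
              have h4 : a - m 0 = -(r / 2) := by rw [hmdef]; push_cast; ring
              rw [h4, abs_neg, abs_of_pos (by linarith)]
            · push_neg at hxa
              refine ⟨x, rfl, ?_⟩
              have hnn : 0 ≤ ⌊(x - a) / r⌋ :=
                Int.floor_nonneg.mpr (div_nonneg (by linarith) hr.le)
              have hic : ((i : ℤ) : ℝ) = (⌊(x - a) / r⌋ : ℝ) := by
                rw [hi]
                exact congrArg (Int.cast : ℤ → ℝ) (Int.toNat_of_nonneg hnn)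
              have h1 : ((i : ℤ) : ℝ) ≤ (x - a) / r := by
                rw [hic]; exact Int.floor_le _
              have h2 : (x - a) / r < ((i : ℤ) : ℝ) + 1 := by
                rw [hic]; exact Int.lt_floor_add_one _
              rw [le_div_iff₀ hr] at h1
              rw [div_lt_iff₀ hr] at h2
              rw [hmdef]
              push_cast at h1 h2 ⊢
              rw [abs_le]
              constructor <;> nlinarith
          obtain ⟨x', hfx', hxm'⟩ := key
          rw [hfx']
          calc |f x' - ((K i : ℝ) * r + r / 2)|
              ≤ |f x' - f (m i)| + |f (m i) - ((K i : ℝ) * r + r / 2)| := by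
                have := abs_sub_le (f x') (f (m i)) ((K i : ℝ) * r + r / 2)
                exact this
            _ ≤ r / 2 + r / 2 := by
                apply add_le_add
                · exact le_trans (hfd x' (m i)) hxm'
                · exact hKr i
            _ = r := by ring
      · -- beyond the grid: g x = 0 and |f x| ≤ r
        rw [coverFun, if_neg hx]
        push_neg at hx
        rw [sub_zero]
        by_cases hxb : b < x
        · rw [hzero x (Or.inr hxb)]
          simpa using hr.le
        · push_neg at hxb
          have h1 : |f x| ≤ b - x := by
            have := hfd x b
            rw [hb0, sub_zero] at this
            calc |f x| ≤ |x - b| := this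
              _ = b - x := by rw [abs_of_nonpos (by linarith)]; ring
          have h2 : (b - a) / r < (n : ℝ) + 1 := by
            rw [hn]
            exact Nat.lt_floor_add_one _
          rw [div_lt_iff₀ hr] at h2
          linarith
end

section
/- Let α > 0, n > 9, and let P be the distribution on [0,1] with density p(x) = (α+1)x^α. Let t_n be the spread function of P. Then for all x with a_n ≤ x ≤ 1, where a_n := ((log n)/(n·2^{α+1}))^{1/(α+3)}, it holds that ((log n)/(2^{α+1}(α+1) n x^α))^{1/3} ≤ t_n(x) ≤ ((log n)/(n x^α))^{1/3}. -/
open MeasureTheory Set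

lemma my_measure_eval (α : ℝ) (hα : 0 < α) (a b : ℝ) (h : max a 0 ≤ min b 1) :
    ((((volume.restrict (Set.Icc (0:ℝ) 1)).withDensity
      (fun x => ENNReal.ofReal ((α + 1) * x ^ α))) (Set.Icc a b)).toReal)
      = (min b 1) ^ (α + 1) - (max a 0) ^ (α + 1) := by
  set A := max a 0 with hA
  set B := min b 1 with hB
  have hA0 : 0 ≤ A := le_max_right _ _
  have hB1 : B ≤ 1 := min_le_right _ _
  rw [withDensity_apply _ measurableSet_Icc, Measure.restrict_restrict measurableSet_Icc,
      Set.Icc_inter_Icc, ← hA, ← hB]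
  have hint : IntegrableOn (fun u : ℝ => (α + 1) * u ^ α) (Set.Icc A B) := by
    have h1 : IntervalIntegrable (fun u : ℝ => u ^ α) volume A B :=
      intervalIntegral.intervalIntegrable_rpow' (by linarith)
    have h2 : IntegrableOn (fun u : ℝ => u ^ α) (Set.Icc A B) := by
      rw [integrableOn_Icc_iff_integrableOn_Ioc]
      simpa [intervalIntegrable_iff_integrableOn_Ioc_of_le h] using h1
    exact h2.const_mul _
  have hnn : 0 ≤ᵐ[volume.restrict (Set.Icc A B)] fun u : ℝ => (α + 1) * u ^ α := by
    filter_upwards [ae_restrict_mem measurableSet_Icc] with u hu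
    have : (0:ℝ) ≤ u := le_trans hA0 hu.1
    positivity
  rw [← ofReal_integral_eq_lintegral_ofReal hint hnn]
  have hval : ∫ u in Set.Icc A B, (α + 1) * u ^ α = B ^ (α + 1) - A ^ (α + 1) := by
    rw [integral_Icc_eq_integral_Ioc, ← intervalIntegral.integral_of_le h,
        intervalIntegral.integral_const_mul, integral_rpow (Or.inl (by linarith))]
    field_simp
  rw [hval, ENNReal.toReal_ofReal]
  exact sub_nonneg.2 (Real.rpow_le_rpow hA0 h (by linarith))

lemma my_rpow_sub_rpow (p : ℝ) (hp : 1 ≤ p) (A B : ℝ) (hA : 0 ≤ A) (hAB : A ≤ B) :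
    B ^ p - A ^ p ≤ p * B ^ (p - 1) * (B - A) := by
  rcases eq_or_lt_of_le (hA.trans hAB) with hB | hB
  · rw [← hB]
    have hA' : A = 0 := le_antisymm (hAB.trans hB.symm.le) hA
    simp [hA', Real.zero_rpow (by positivity : p ≠ 0)]
  · set u := A / B with hu
    have hu0 : 0 ≤ u := div_nonneg hA hB.le
    have hu1 : u ≤ 1 := (div_le_one hB).2 hAB
    have hber : 1 + p * (u - 1) ≤ u ^ p := by
      have := one_add_mul_self_le_rpow_one_add (by linarith : (-1:ℝ) ≤ u - 1) hp
      simpa using this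
    have hAu : A = u * B := by rw [hu, div_mul_cancel₀ A hB.ne']
    have hApow : A ^ p = u ^ p * B ^ p := by
      rw [hAu, Real.mul_rpow hu0 hB.le]
    have hBp : 0 < B ^ p := Real.rpow_pos_of_pos hB p
    have key : B ^ p - A ^ p ≤ p * B ^ p * (1 - u) := by
      rw [hApow]; nlinarith
    have hBp1 : B ^ p = B ^ (p - 1) * B := by
      rw [← Real.rpow_add_one hB.ne' (p-1)]; ring_nf
    calc B ^ p - A ^ p ≤ p * B ^ p * (1 - u) := key
      _ = p * B ^ (p - 1) * (B - A) := by rw [hBp1, hAu]; ring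

set_option maxHeartbeats 2000000 in
/-- Spread function bounds for the density `p(x) = (α+1)x^α` in the regime
`a_n ≤ x ≤ 1`, where `a_n = ((log n)/(n 2^{α+1}))^{1/(α+3)}`:
`((log n)/(2^{α+1}(α+1) n x^α))^{1/3} ≤ t_n(x) ≤ ((log n)/(n x^α))^{1/3}`. -/
theorem spread_function_power_density_second_regime
    (α : ℝ) (hα : 0 < α) (P : Measure ℝ)
    (hP : P = (volume.restrict (Set.Icc (0:ℝ) 1)).withDensity
      (fun x => ENNReal.ofReal ((α + 1) * x ^ α)))
    (n : ℕ) (hn : 9 < n)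
    (x : ℝ)
    (hx : x ∈ Set.Icc ((Real.log n / (n * 2 ^ (α + 1))) ^ (1 / (α + 3))) (1:ℝ))
    (t : ℝ) (ht_pos : 0 < t)
    (ht_eq : t ^ 2 * (P (Set.Icc (x - t) (x + t))).toReal = Real.log n / n) :
    (Real.log n / (2 ^ (α + 1) * (α + 1) * n * x ^ α)) ^ ((1:ℝ)/3) ≤ t ∧
      t ≤ (Real.log n / (n * x ^ α)) ^ ((1:ℝ)/3) := by
  have hn10 : (10:ℝ) ≤ n := by exact_mod_cast hn
  have hN : (0:ℝ) < n := by linarith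
  have hL : 0 < Real.log n := Real.log_pos (by linarith)
  have h2p : (0:ℝ) < 2 ^ (α + 1) := by positivity
  have hx0 : 0 < x :=
    lt_of_lt_of_le (Real.rpow_pos_of_pos (by positivity) _) hx.1
  have hx1 : x ≤ 1 := hx.2
  have hxα : 0 < x ^ α := Real.rpow_pos_of_pos hx0 α
  have hxa1 : x ^ (α + 1) = x ^ α * x := Real.rpow_add_one hx0.ne' α
  have hX1 : 0 < x ^ (α + 1) := Real.rpow_pos_of_pos hx0 _
  -- x^(α+3) ≥ log n / (n * 2^(α+1))
  have hxpow : Real.log n / (n * 2 ^ (α + 1)) ≤ x ^ (α + 3) := by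
    have hy : (0:ℝ) ≤ Real.log n / (n * 2 ^ (α + 1)) := by positivity
    have h1 : ((Real.log n / (n * 2 ^ (α + 1))) ^ ((1:ℝ) / (α + 3))) ^ (α + 3)
        = Real.log n / (n * 2 ^ (α + 1)) := by
      rw [← Real.rpow_mul hy, one_div, inv_mul_cancel₀ (by linarith : α + 3 ≠ 0),
        Real.rpow_one]
    calc Real.log n / (n * 2 ^ (α + 1))
        = ((Real.log n / (n * 2 ^ (α + 1))) ^ ((1:ℝ) / (α + 3))) ^ (α + 3) := h1.symm
      _ ≤ x ^ (α + 3) := Real.rpow_le_rpow (Real.rpow_nonneg hy _) hx.1 (by linarith)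
  have hLN : Real.log n / n ≤ 2 ^ (α + 1) * x ^ (α + 3) := by
    rw [div_mul_eq_div_div] at hxpow
    rw [div_le_iff₀ h2p] at hxpow
    linarith
  set A := max (x - t) 0 with hAdef
  set B := min (x + t) 1 with hBdef
  have hA0 : 0 ≤ A := le_max_right _ _
  have hAx : A ≤ x := max_le (by linarith) hx0.le
  have hxB : x ≤ B := le_min (by linarith) hx1
  have hB0 : 0 ≤ B := hx0.le.trans hxB
  have hAxt : x - t ≤ A := le_max_left _ _
  have hBxt : B ≤ x + t := min_le_left _ _
  have hq : (P (Set.Icc (x - t) (x + t))).toReal = B ^ (α + 1) - A ^ (α + 1) := by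
    rw [hP]; exact my_measure_eval α hα _ _ (hAx.trans hxB)
  rw [hq] at ht_eq
  -- Step: B ≤ 2x
  have hB2x : B ≤ 2 * x := by
    rcases le_or_gt 1 (2 * x) with h1 | h1
    · exact le_trans (min_le_right _ _) h1
    · have htx : t ≤ x := by
        by_contra hc
        push_neg at hc
        have hAv : A = 0 := max_eq_right (by linarith)
        have h2xB : 2 * x ≤ B := le_min (by linarith) h1.le
        have hq2 : (2 * x) ^ (α + 1) ≤ B ^ (α + 1) :=
          Real.rpow_le_rpow (by positivity) h2xB (by linarith)
        have h2x : (2 * x) ^ (α + 1) = 2 ^ (α + 1) * x ^ (α + 1) :=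
          Real.mul_rpow (by norm_num) hx0.le
        have hx23 : x ^ (2:ℝ) * x ^ (α + 1) = x ^ (α + 3) := by
          rw [← Real.rpow_add hx0, show (2:ℝ) + (α + 1) = α + 3 from by ring]
        have e1 : x ^ (2:ℝ) = x ^ (2:ℕ) := by
          rw [← Real.rpow_natCast x 2]; norm_num
        have hA0' : A ^ (α + 1) = 0 := by
          rw [hAv, Real.zero_rpow (by linarith : α + 1 ≠ 0)]
        rw [hA0'] at ht_eq
        have ht2 : x ^ 2 < t ^ 2 := by nlinarith
        have hstep : x ^ 2 * (2 ^ (α + 1) * x ^ (α + 1)) < t ^ 2 * (B ^ (α + 1) - 0) := by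
          have hpos : 0 < 2 ^ (α + 1) * x ^ (α + 1) := by positivity
          calc x ^ 2 * (2 ^ (α + 1) * x ^ (α + 1)) < t ^ 2 * (2 ^ (α + 1) * x ^ (α + 1)) :=
                (mul_lt_mul_of_pos_right ht2 hpos)
            _ ≤ t ^ 2 * (B ^ (α + 1) - 0) := by
                have := h2x ▸ hq2
                nlinarith
        rw [ht_eq] at hstep
        have : x ^ 2 * (2 ^ (α + 1) * x ^ (α + 1)) = 2 ^ (α + 1) * x ^ (α + 3) := by
          rw [← hx23, e1]; ring
        rw [this] at hstep
        linarith
      exact le_trans (min_le_left _ _) (by linarith)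
  -- Step: lower bound on the measure: t * x^α ≤ q
  have hqlow : t * x ^ α ≤ B ^ (α + 1) - A ^ (α + 1) := by
    have hAp : A ^ (α + 1) ≤ x ^ (α + 1) := Real.rpow_le_rpow hA0 hAx (by linarith)
    rcases le_or_gt (x + t) 1 with h1 | h1
    · have hBv : B = x + t := min_eq_left h1
      have h2 : x ^ α ≤ (x + t) ^ α := Real.rpow_le_rpow hx0.le (by linarith) hα.le
      have h3 : (x + t) ^ (α + 1) = (x + t) ^ α * (x + t) :=
        Real.rpow_add_one (by positivity) α
      rw [hBv, h3]
      nlinarith [mul_le_mul_of_nonneg_right h2 (by positivity : (0:ℝ) ≤ x + t)]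
    · have hBv : B = 1 := min_eq_right h1.le
      have hAA : A ^ (α + 1) ≤ A := by
        rcases eq_or_lt_of_le hA0 with h0 | h0
        · rw [← h0, Real.zero_rpow (by linarith : α + 1 ≠ 0)]
        · have := Real.rpow_le_rpow_of_exponent_ge h0 (hAx.trans hx1)
            (by linarith : (1:ℝ) ≤ α + 1)
          simpa using this
      have hxle : x ^ α ≤ 1 := Real.rpow_le_one hx0.le hx1 hα.le
      rcases le_or_gt (x - t) 0 with h2 | h2
      · have hAv : A = 0 := max_eq_right h2
        have hq1 : B ^ (α + 1) - A ^ (α + 1) = 1 := by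
          rw [hBv, hAv, Real.one_rpow, Real.zero_rpow (by linarith : α + 1 ≠ 0)]; ring
        have hLn : Real.log n / n < 1 := (div_lt_one hN).2 (by nlinarith [Real.log_lt_sub_one_of_pos (show (0:ℝ) < n by linarith) (ne_of_gt (by linarith : (1:ℝ) < (n:ℝ)))])
        rw [hq1] at ht_eq ⊢
        have ht2 : t ^ 2 < 1 := by nlinarith
        have ht1 : t < 1 := by nlinarith
        nlinarith [mul_le_mul_of_nonneg_left hxle ht_pos.le]
      · have hAv : A = x - t := max_eq_left h2.le
        rw [hBv, Real.one_rpow, hAv]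
        rw [hAv] at hAA
        nlinarith [mul_le_mul_of_nonneg_left hxle ht_pos.le]
  -- Upper bound
  have ht3u : t ^ 3 * x ^ α ≤ Real.log n / n := by
    nlinarith [mul_le_mul_of_nonneg_left hqlow (by positivity : (0:ℝ) ≤ t ^ 2)]
  have hub : t ≤ (Real.log n / (n * x ^ α)) ^ ((1:ℝ)/3) := by
    have h4 : t ^ (3:ℕ) ≤ Real.log n / (n * x ^ α) := by
      rw [le_div_iff₀ (by positivity)]
      rw [le_div_iff₀ hN] at ht3u
      nlinarith
    calc t = (t ^ (3:ℕ)) ^ ((1:ℝ)/3) := by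
          rw [← Real.rpow_natCast t 3, ← Real.rpow_mul ht_pos.le]; norm_num
      _ ≤ _ := Real.rpow_le_rpow (by positivity) h4 (by norm_num)
  -- Lower bound
  have hqup : B ^ (α + 1) - A ^ (α + 1) ≤ 2 ^ (α + 1) * (α + 1) * x ^ α * t := by
    have h5 := my_rpow_sub_rpow (α + 1) (by linarith) A B hA0 (hAx.trans hxB)
    have e2 : α + 1 - 1 = α := by ring
    rw [e2] at h5
    have hBα : B ^ α ≤ (2 * x) ^ α := Real.rpow_le_rpow hB0 hB2x hα.le
    have h2xα : (2 * x) ^ α = 2 ^ α * x ^ α := Real.mul_rpow (by norm_num) hx0.le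
    have hBA : B - A ≤ 2 * t := by linarith
    have h2a1 : (2:ℝ) ^ (α + 1) = 2 ^ α * 2 := Real.rpow_add_one (by norm_num) α
    have hBα0 : 0 ≤ B ^ α := Real.rpow_nonneg hB0 α
    have h2α0 : (0:ℝ) ≤ 2 ^ α := by positivity
    calc B ^ (α + 1) - A ^ (α + 1) ≤ (α + 1) * B ^ α * (B - A) := h5
      _ ≤ (α + 1) * (2 ^ α * x ^ α) * (2 * t) := by
          have hBA0 : 0 ≤ B - A := by linarith [hAx.trans hxB]
          have hBα' : B ^ α ≤ 2 ^ α * x ^ α := h2xα ▸ hBα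
          exact mul_le_mul (mul_le_mul_of_nonneg_left hBα' (by linarith)) hBA hBA0
            (by positivity)
      _ = 2 ^ (α + 1) * (α + 1) * x ^ α * t := by rw [h2a1]; ring
  have ht3l : Real.log n / n ≤ 2 ^ (α + 1) * (α + 1) * x ^ α * t ^ 3 := by
    nlinarith [mul_le_mul_of_nonneg_left hqup (by positivity : (0:ℝ) ≤ t ^ 2)]
  have hlb : (Real.log n / (2 ^ (α + 1) * (α + 1) * n * x ^ α)) ^ ((1:ℝ)/3) ≤ t := by
    have h6 : Real.log n / (2 ^ (α + 1) * (α + 1) * n * x ^ α) ≤ t ^ (3:ℕ) := by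
      rw [div_le_iff₀ (by positivity)]
      rw [div_le_iff₀ hN] at ht3l
      nlinarith
    calc (Real.log n / (2 ^ (α + 1) * (α + 1) * n * x ^ α)) ^ ((1:ℝ)/3)
        ≤ (t ^ (3:ℕ)) ^ ((1:ℝ)/3) :=
          Real.rpow_le_rpow (by positivity) h6 (by norm_num)
      _ = t := by rw [← Real.rpow_natCast t 3, ← Real.rpow_mul ht_pos.le]; norm_num
  exact ⟨hlb, hub⟩
end

section
/- Let α > 0, n > 9, and let P be the distribution on [0,1] with density p(x) = (α+1)x^α, with spread function t_n. Then for all x with 0 ≤ x ≤ a_n := ((log n)/(n·2^{α+1}))^{1/(α+3)}, it holds that ((log n)/(2^{α+1} n))^{1/(α+3)} ≤ t_n(x) ≤ ((log n)/n)^{1/(α+3)}. -/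
open MeasureTheory Set

lemma aux_Q (α : ℝ) (hα : 0 < α) (c : ℝ) (hc : 0 ≤ c) :
    (∫⁻ u in Icc (0:ℝ) c, ENNReal.ofReal ((α + 1) * u ^ α)) =
      ENNReal.ofReal (c ^ (α + 1)) := by
  have hint : IntegrableOn (fun u : ℝ => (α + 1) * u ^ α) (Icc 0 c) := by
    have h1 : IntervalIntegrable (fun u : ℝ => u ^ α) volume 0 c :=
      intervalIntegral.intervalIntegrable_rpow' (by linarith)
    have h2 := h1.const_mul (α + 1)
    rw [intervalIntegrable_iff_integrableOn_Icc_of_le hc] at h2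
    exact h2
  have hnn : 0 ≤ᵐ[volume.restrict (Icc (0:ℝ) c)] fun u : ℝ => (α + 1) * u ^ α := by
    filter_upwards [ae_restrict_mem measurableSet_Icc] with u hu
    exact mul_nonneg (by linarith) (Real.rpow_nonneg hu.1 α)
  rw [← MeasureTheory.ofReal_integral_eq_lintegral_ofReal hint hnn]
  congr 1
  rw [integral_Icc_eq_integral_Ioc, ← intervalIntegral.integral_of_le hc,
    intervalIntegral.integral_const_mul, integral_rpow (Or.inl (by linarith)),
    Real.zero_rpow (by linarith)]
  field_simp
  rw [sub_zero]

/-- Spread function bounds for the density `p(x) = (α+1)x^α` in the regime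
`0 ≤ x ≤ a_n`, where `a_n = ((log n)/(n 2^{α+1}))^{1/(α+3)}`:
`((log n)/(2^{α+1} n))^{1/(α+3)} ≤ t_n(x) ≤ ((log n)/n)^{1/(α+3)}`. -/
theorem spread_function_power_density_first_regime
    (α : ℝ) (hα : 0 < α) (P : Measure ℝ)
    (hP : P = (volume.restrict (Set.Icc (0:ℝ) 1)).withDensity
      (fun x => ENNReal.ofReal ((α + 1) * x ^ α)))
    (n : ℕ) (hn : 9 < n)
    (x : ℝ)
    (hx : x ∈ Set.Icc (0:ℝ) ((Real.log n / (n * 2 ^ (α + 1))) ^ (1 / (α + 3))))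
    (t : ℝ) (ht_pos : 0 < t)
    (ht_eq : t ^ 2 * (P (Set.Icc (x - t) (x + t))).toReal = Real.log n / n) :
    (Real.log n / (2 ^ (α + 1) * n)) ^ (1 / (α + 3)) ≤ t ∧
      t ≤ (Real.log n / n) ^ (1 / (α + 3)) := by
  set L : ℝ := (Real.log n / (2 ^ (α + 1) * n)) ^ (1 / (α + 3)) with hLdef
  set U : ℝ := (Real.log n / n) ^ (1 / (α + 3)) with hUdef
  have hn1 : (1:ℝ) < n := by exact_mod_cast Nat.lt_of_lt_of_le (by norm_num) hn.le
  have hnpos : (0:ℝ) < n := by linarith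
  have hlog : 0 < Real.log n := Real.log_pos hn1
  have h2pos : (0:ℝ) < 2 ^ (α + 1) := Real.rpow_pos_of_pos (by norm_num) _
  have h2ge1 : (1:ℝ) ≤ 2 ^ (α + 1) := Real.one_le_rpow one_le_two (by linarith)
  have hBpos : 0 < Real.log n / (2 ^ (α + 1) * n) := div_pos hlog (mul_pos h2pos hnpos)
  have hB'pos : 0 < Real.log n / n := div_pos hlog hnpos
  have hexp : 0 < 1 / (α + 3) := by positivity
  have hLpos : 0 < L := Real.rpow_pos_of_pos hBpos _
  have hUpos : 0 < U := Real.rpow_pos_of_pos hB'pos _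
  have hLU : L ≤ U := by
    apply Real.rpow_le_rpow hBpos.le _ hexp.le
    apply div_le_div_of_nonneg_left hlog.le hnpos
    exact le_mul_of_one_le_left hnpos.le h2ge1
  have hU1 : U ≤ 1 := by
    apply Real.rpow_le_one hB'pos.le _ hexp.le
    rw [div_le_one hnpos]
    linarith [Real.log_le_sub_one_of_pos hnpos]
  have hL1 : L ≤ 1 := hLU.trans hU1
  have hx0 : 0 ≤ x := hx.1
  have hxL : x ≤ L := by
    have := hx.2
    rwa [show Real.log n / (↑n * 2 ^ (α + 1)) = Real.log n / (2 ^ (α + 1) * ↑n) by ring]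
      at this
  have hxU : x ≤ U := hxL.trans hLU
  -- measure of intervals
  have hPicc : ∀ a b : ℝ, P (Icc a b) =
      ∫⁻ u in Icc (a ⊔ 0) (b ⊓ 1), ENNReal.ofReal ((α + 1) * u ^ α) := by
    intro a b
    rw [hP, withDensity_apply _ measurableSet_Icc,
      Measure.restrict_restrict measurableSet_Icc, Icc_inter_Icc]
  have key : ∀ s : ℝ, 0 < s → x ≤ s →
      P (Icc (x - s) (x + s)) = ENNReal.ofReal (min (x + s) 1 ^ (α + 1)) := by
    intro s hs hxs
    rw [hPicc]
    have h1 : (x - s) ⊔ 0 = 0 := sup_eq_right.mpr (by linarith)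
    have h2 : (x + s) ⊓ 1 = min (x + s) 1 := rfl
    rw [h1, h2, aux_Q α hα _ (le_min (by linarith) zero_le_one)]
  have hPL := key L hLpos hxL
  have hPU := key U hUpos hxU
  have hminLnn : (0:ℝ) ≤ min (x + L) 1 := le_min (by linarith) zero_le_one
  have hminUnn : (0:ℝ) ≤ min (x + U) 1 := le_min (by linarith) zero_le_one
  have hPLr : (P (Icc (x - L) (x + L))).toReal = min (x + L) 1 ^ (α + 1) := by
    rw [hPL, ENNReal.toReal_ofReal (Real.rpow_nonneg hminLnn _)]
  have hPUr : (P (Icc (x - U) (x + U))).toReal = min (x + U) 1 ^ (α + 1) := by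
    rw [hPU, ENNReal.toReal_ofReal (Real.rpow_nonneg hminUnn _)]
  -- rpow arithmetic
  have hmul : (1 / (α + 3)) * (α + 3) = 1 := by field_simp
  have hL3 : L ^ (α + 3) = Real.log n / (2 ^ (α + 1) * n) := by
    rw [hLdef, ← Real.rpow_mul hBpos.le, hmul, Real.rpow_one]
  have hU3 : U ^ (α + 3) = Real.log n / n := by
    rw [hUdef, ← Real.rpow_mul hB'pos.le, hmul, Real.rpow_one]
  have hLsplit : L ^ 2 * L ^ (α + 1) = L ^ (α + 3) := by
    rw [← Real.rpow_natCast L 2, ← Real.rpow_add hLpos]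
    congr 1
    push_cast
    ring
  have hUsplit : U ^ 2 * U ^ (α + 1) = U ^ (α + 3) := by
    rw [← Real.rpow_natCast U 2, ← Real.rpow_add hUpos]
    congr 1
    push_cast
    ring
  have keyL : L ^ 2 * (2 * L) ^ (α + 1) = Real.log n / n := by
    rw [Real.mul_rpow (by norm_num) hLpos.le]
    rw [show L ^ 2 * (2 ^ (α + 1) * L ^ (α + 1)) = 2 ^ (α + 1) * (L ^ 2 * L ^ (α + 1)) by ring,
      hLsplit, hL3]
    field_simp
  have keyU : U ^ 2 * U ^ (α + 1) = Real.log n / n := by rw [hUsplit, hU3]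
  constructor
  · -- lower bound
    by_contra h
    push_neg at h
    have hPLne : P (Icc (x - L) (x + L)) ≠ ⊤ := by rw [hPL]; exact ENNReal.ofReal_ne_top
    have hmono : (P (Icc (x - t) (x + t))).toReal ≤ min (x + L) 1 ^ (α + 1) := by
      rw [← hPLr]
      exact ENNReal.toReal_mono hPLne
        (measure_mono (Icc_subset_Icc (by linarith) (by linarith)))
    have hminle : min (x + L) 1 ^ (α + 1) ≤ (2 * L) ^ (α + 1) := by
      apply Real.rpow_le_rpow hminLnn _ (by linarith)
      calc min (x + L) 1 ≤ x + L := min_le_left _ _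
        _ ≤ 2 * L := by linarith
    have hpos2L : 0 < (2 * L) ^ (α + 1) := Real.rpow_pos_of_pos (by linarith) _
    have ht2 : t ^ 2 < L ^ 2 := by
      apply pow_lt_pow_left₀ h ht_pos.le
      norm_num
    have : Real.log n / n < Real.log n / n := by
      calc Real.log n / n = t ^ 2 * (P (Icc (x - t) (x + t))).toReal := ht_eq.symm
        _ ≤ t ^ 2 * (2 * L) ^ (α + 1) := by
            apply mul_le_mul_of_nonneg_left (hmono.trans hminle) (by positivity)
        _ < L ^ 2 * (2 * L) ^ (α + 1) := by
            apply mul_lt_mul_of_pos_right ht2 hpos2L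
        _ = Real.log n / n := keyL
    exact lt_irrefl _ this
  · -- upper bound
    by_contra h
    push_neg at h
    have hPtne : P (Icc (x - t) (x + t)) ≠ ⊤ := by
      intro htop
      have hz : (P (Icc (x - t) (x + t))).toReal = 0 := by rw [htop]; simp
      rw [hz, mul_zero] at ht_eq
      linarith
    have hUmin : U ^ (α + 1) ≤ min (x + U) 1 ^ (α + 1) := by
      apply Real.rpow_le_rpow hUpos.le (le_min (by linarith) hU1) (by linarith)
    have hmono : min (x + U) 1 ^ (α + 1) ≤ (P (Icc (x - t) (x + t))).toReal := by
      rw [← hPUr]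
      exact ENNReal.toReal_mono hPtne
        (measure_mono (Icc_subset_Icc (by linarith) (by linarith)))
    have ht2 : U ^ 2 < t ^ 2 := by
      apply pow_lt_pow_left₀ h hUpos.le
      norm_num
    have hposU : 0 < U ^ (α + 1) := Real.rpow_pos_of_pos hUpos _
    have : Real.log n / n < Real.log n / n := by
      calc Real.log n / n = U ^ 2 * U ^ (α + 1) := keyU.symm
        _ < t ^ 2 * U ^ (α + 1) := mul_lt_mul_of_pos_right ht2 hposU
        _ ≤ t ^ 2 * (P (Icc (x - t) (x + t))).toReal := by
            apply mul_le_mul_of_nonneg_left (hUmin.trans hmono) (by positivity)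
        _ = Real.log n / n := ht_eq
    exact lt_irrefl _ this
end

section
/- Let P, Q be probability distributions on [0,1] with Lebesgue densities and spread functions t_n^P, t_m^Q with parameters n, m > 1 respectively. Define the mixture P̃ := (n/(n+m))·P + (m/(n+m))·Q, with spread function t_{n+m}^{P̃}. Then for all x ∈ [0,1], t_{n+m}^{P̃}(x) ≤ min( t_n^P(x)·√(log(n+m)/log n), t_m^Q(x)·√(log(n+m)/log m) ). -/
open MeasureTheory Set
open scoped ENNReal

/-- Key comparison lemma: if `Pm ≥ (n/N)·μ` setwise, `t` solves the spread equation for `μ`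
with parameter `n`, and `u` solves it for `Pm` with parameter `N > n`, then
`u ≤ t·√(log N / log n)`. -/
lemma mix_key (μ Pm : Measure ℝ) [IsFiniteMeasure μ] [IsFiniteMeasure Pm]
    (n N : ℕ) (hn : 2 ≤ n) (hnN : n < N)
    (hle : ∀ s : Set ℝ, ((n : ℝ≥0∞) / (N : ℝ≥0∞)) * μ s ≤ Pm s)
    (x t u : ℝ) (ht : 0 < t) (hu : 0 < u)
    (hteq : t ^ 2 * (μ (Icc (x - t) (x + t))).toReal = Real.log n / n)
    (hueq : u ^ 2 * (Pm (Icc (x - u) (x + u))).toReal = Real.log N / N) :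
    u ≤ t * Real.sqrt (Real.log N / Real.log n) := by
  have hn1 : (1 : ℝ) < n := by exact_mod_cast lt_of_lt_of_le one_lt_two hn
  have hN1 : (1 : ℝ) < N := by
    have : (n : ℝ) < N := by exact_mod_cast hnN
    linarith
  have hn0 : (0 : ℝ) < n := by linarith
  have hN0 : (0 : ℝ) < N := by linarith
  have hln0 : 0 < Real.log n := Real.log_pos hn1
  have hL0 : 0 < Real.log N := Real.log_pos hN1
  have hlnL : Real.log n ≤ Real.log N := by
    apply Real.log_le_log hn0
    exact_mod_cast hnN.le
  have hratio : 1 ≤ Real.log N / Real.log n := (one_le_div hln0).2 hlnL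
  set s : ℝ := t * Real.sqrt (Real.log N / Real.log n) with hs_def
  have hsqrt1 : 1 ≤ Real.sqrt (Real.log N / Real.log n) := by
    have := Real.sqrt_le_sqrt hratio
    rwa [Real.sqrt_one] at this
  have hts : t ≤ s := le_mul_of_one_le_right ht.le hsqrt1
  have hs_pos : 0 < s := lt_of_lt_of_le ht hts
  have hs2 : s ^ 2 = t ^ 2 * (Real.log N / Real.log n) := by
    rw [hs_def, mul_pow, Real.sq_sqrt (by positivity)]
  -- lower bound the mixture measure of the `s`-interval
  have hmeas1 : ((n : ℝ) / N) * (μ (Icc (x - s) (x + s))).toReal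
      ≤ (Pm (Icc (x - s) (x + s))).toReal := by
    have h := ENNReal.toReal_mono (measure_ne_top Pm _) (hle (Icc (x - s) (x + s)))
    rwa [ENNReal.toReal_mul, ENNReal.toReal_div, ENNReal.toReal_natCast, ENNReal.toReal_natCast] at h
  have hmeas2 : (μ (Icc (x - t) (x + t))).toReal ≤ (μ (Icc (x - s) (x + s))).toReal :=
    ENNReal.toReal_mono (measure_ne_top μ _)
      (measure_mono (Icc_subset_Icc (by linarith) (by linarith)))
  have hprod : t ^ 2 * (Real.log N / Real.log n) * ((n : ℝ) / N *
      (μ (Icc (x - t) (x + t))).toReal) = Real.log N / N := by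
    have h1 : t ^ 2 * (Real.log N / Real.log n) * ((n : ℝ) / N *
        (μ (Icc (x - t) (x + t))).toReal)
        = (Real.log N / Real.log n) * ((n : ℝ) / N) *
          (t ^ 2 * (μ (Icc (x - t) (x + t))).toReal) := by ring
    rw [h1, hteq]
    field_simp
  have hfs : Real.log N / N ≤ s ^ 2 * (Pm (Icc (x - s) (x + s))).toReal := by
    calc Real.log N / N
        = t ^ 2 * (Real.log N / Real.log n) * ((n : ℝ) / N *
            (μ (Icc (x - t) (x + t))).toReal) := hprod.symm
      _ ≤ t ^ 2 * (Real.log N / Real.log n) * ((n : ℝ) / N *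
            (μ (Icc (x - s) (x + s))).toReal) := by
          apply mul_le_mul_of_nonneg_left _ (by positivity)
          exact mul_le_mul_of_nonneg_left hmeas2 (by positivity)
      _ ≤ s ^ 2 * (Pm (Icc (x - s) (x + s))).toReal := by
          rw [hs2]
          exact mul_le_mul_of_nonneg_left hmeas1 (by positivity)
  -- conclude by monotonicity / contradiction
  by_contra hcon
  push_neg at hcon
  have hPms_pos : 0 < (Pm (Icc (x - s) (x + s))).toReal := by
    rcases (ENNReal.toReal_nonneg (a := Pm (Icc (x - s) (x + s)))).eq_or_lt with h | h
    · exfalso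
      have : Real.log N / N ≤ 0 := by
        rw [h.symm] at hfs
        simpa using hfs
      have : 0 < Real.log N / N := by positivity
      linarith
    · exact h
  have hmono : (Pm (Icc (x - s) (x + s))).toReal ≤ (Pm (Icc (x - u) (x + u))).toReal :=
    ENNReal.toReal_mono (measure_ne_top Pm _)
      (measure_mono (Icc_subset_Icc (by linarith) (by linarith)))
  have hlt : Real.log N / N < u ^ 2 * (Pm (Icc (x - u) (x + u))).toReal := by
    calc Real.log N / N ≤ s ^ 2 * (Pm (Icc (x - s) (x + s))).toReal := hfs
      _ < u ^ 2 * (Pm (Icc (x - s) (x + s))).toReal := by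
          have hsq : s ^ 2 < u ^ 2 := by nlinarith
          exact mul_lt_mul_of_pos_right hsq hPms_pos
      _ ≤ u ^ 2 * (Pm (Icc (x - u) (x + u))).toReal :=
          mul_le_mul_of_nonneg_left hmono (sq_nonneg u)
  linarith [hueq]

/-- Spread function of the mixture `P̃ = (n/(n+m))P + (m/(n+m))Q` is bounded by
`min(t_n^P(x)·√(log(n+m)/log n), t_m^Q(x)·√(log(n+m)/log m))`. -/
theorem spread_function_mixture_bound
    (P Q : Measure ℝ) [IsProbabilityMeasure P] [IsProbabilityMeasure Q]
    (hPac : P ≪ volume) (hQac : Q ≪ volume)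
    (hPsupp : P (Set.Icc (0:ℝ) 1) = 1) (hQsupp : Q (Set.Icc (0:ℝ) 1) = 1)
    (n m : ℕ) (hn : 2 ≤ n) (hm : 2 ≤ m)
    (Pmix : Measure ℝ)
    (hmix : Pmix = ((n : ℝ≥0∞) / (n + m)) • P + ((m : ℝ≥0∞) / (n + m)) • Q)
    (tP tQ tMix : ℝ → ℝ)
    (htP_pos : ∀ x ∈ Set.Icc (0:ℝ) 1, 0 < tP x)
    (htQ_pos : ∀ x ∈ Set.Icc (0:ℝ) 1, 0 < tQ x)
    (htMix_pos : ∀ x ∈ Set.Icc (0:ℝ) 1, 0 < tMix x)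
    (htP_eq : ∀ x ∈ Set.Icc (0:ℝ) 1,
      (tP x) ^ 2 * (P (Set.Icc (x - tP x) (x + tP x))).toReal = Real.log n / n)
    (htQ_eq : ∀ x ∈ Set.Icc (0:ℝ) 1,
      (tQ x) ^ 2 * (Q (Set.Icc (x - tQ x) (x + tQ x))).toReal = Real.log m / m)
    (htMix_eq : ∀ x ∈ Set.Icc (0:ℝ) 1,
      (tMix x) ^ 2 * (Pmix (Set.Icc (x - tMix x) (x + tMix x))).toReal
        = Real.log (n + m) / (n + m)) :
    ∀ x ∈ Set.Icc (0:ℝ) 1,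
      tMix x ≤ min (tP x * Real.sqrt (Real.log (n + m) / Real.log n))
                   (tQ x * Real.sqrt (Real.log (n + m) / Real.log m)) := by
  have hcastN : ((n : ℝ≥0∞) + m) = ((n + m : ℕ) : ℝ≥0∞) := by push_cast; ring
  have hNne : ((n : ℝ≥0∞) + m) ≠ 0 := by
    rw [hcastN]
    simp
    omega
  have hPmixFin : IsFiniteMeasure Pmix := by
    rw [hmix]
    refine ⟨?_⟩
    simp only [Measure.add_apply, Measure.smul_apply, smul_eq_mul, measure_univ, mul_one]
    have h1 : (n : ℝ≥0∞) / (n + m) < ⊤ :=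
      ENNReal.div_lt_top (by simp) hNne
    have h2 : (m : ℝ≥0∞) / (n + m) < ⊤ :=
      ENNReal.div_lt_top (by simp) hNne
    exact ENNReal.add_lt_top.2 ⟨h1, h2⟩
  intro x hx
  have hcastR : ((n : ℝ) + m) = ((n + m : ℕ) : ℝ) := by push_cast; ring
  have hmixP : ∀ s : Set ℝ, ((n : ℝ≥0∞) / ((n + m : ℕ) : ℝ≥0∞)) * P s ≤ Pmix s := by
    intro s
    rw [hmix, ← hcastN]
    simp only [Measure.add_apply, Measure.smul_apply, smul_eq_mul]
    exact le_self_add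
  have hmixQ : ∀ s : Set ℝ, ((m : ℝ≥0∞) / ((n + m : ℕ) : ℝ≥0∞)) * Q s ≤ Pmix s := by
    intro s
    rw [hmix, ← hcastN]
    simp only [Measure.add_apply, Measure.smul_apply, smul_eq_mul]
    exact le_add_self
  have hMixEq : (tMix x) ^ 2 * (Pmix (Set.Icc (x - tMix x) (x + tMix x))).toReal
      = Real.log ((n + m : ℕ) : ℝ) / ((n + m : ℕ) : ℝ) := by
    rw [← hcastR]
    exact htMix_eq x hx
  refine le_min ?_ ?_
  · have h := mix_key P Pmix n (n + m) hn (by omega) hmixP x (tP x) (tMix x)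
      (htP_pos x hx) (htMix_pos x hx) (htP_eq x hx) hMixEq
    rwa [← hcastR] at h
  · have h := mix_key Q Pmix m (n + m) hm (by omega) hmixQ x (tQ x) (tMix x)
      (htQ_pos x hx) (htMix_pos x hx) (htQ_eq x hx) hMixEq
    rwa [← hcastR] at h
end

section
/- Let ψ ∈ Lip(1) and f ∈ Lip(1−δ) on [0,1] with 0 < δ < 1, and suppose at a point x̃ ∈ [0,1] maximizing x ↦ ψ(x) − f(x) − (δ/2)|x − x*| (for some fixed x*), we have ψ(x̃) − f(x̃) > s/2 for a given s > 0. Define h(x) := ψ(x̃) − f(x̃) + δ|x − x̃| + f(x) − s/2. Then h ∈ Lip(1), h(x̃) < ψ(x̃), and for all x ∈ [0,1] with |x − x̃| ≥ s/δ one has h(x) ≥ ψ(x); moreover ψ(x) − h(x) ≥ s/2 − 2|x − x̃| for all x ∈ [0,1]. -/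
/-!
The kink `δ |x - x̃|` has slope `δ` and `f` has slope at most `1 - δ`, so `h` is 1-Lipschitz.
Since `x̃` maximizes `ψ - f` penalized by `(δ/2)|x - x*|`, the triangle inequality gives
`ψ x - f x ≤ ψ x̃ - f x̃ + (δ/2)|x - x̃|`; once `δ |x - x̃| ≥ s` the kink in `h` absorbs both this
excess and the shift `s/2`. The last bound is the Lipschitz estimate of `ψ - h` at `x̃`.
-/

theorem lipschitzOnWith_add_mul_abs_sub {f : ℝ → ℝ} {s : Set ℝ} {δ : ℝ} (hδ0 : 0 ≤ δ)
    (hδ1 : δ ≤ 1) (hf : LipschitzOnWith (1 - δ).toNNReal f s) (a c d : ℝ) :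
    LipschitzOnWith 1 (fun x => c + δ * |x - a| + f x - d) s := by
  refine LipschitzOnWith.of_dist_le_mul fun x hx y hy => ?_
  have hfxy := hf.dist_le_mul x hx y hy
  rw [Real.coe_toNNReal _ (by linarith)] at hfxy
  have habs : |(|x - a| - |y - a|)| ≤ |x - y| := by
    simpa using abs_abs_sub_abs_le_abs_sub (x - a) (y - a)
  simp only [Real.dist_eq, NNReal.coe_one, one_mul] at hfxy ⊢
  calc |c + δ * |x - a| + f x - d - (c + δ * |y - a| + f y - d)|
      = |δ * (|x - a| - |y - a|) + (f x - f y)| := by ring_nf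
    _ ≤ δ * |x - y| + (1 - δ) * |x - y| := by
      grw [abs_add_le, abs_mul, abs_of_nonneg hδ0, habs, hfxy]
    _ = |x - y| := by ring

theorem IsMaxOn.le_add_mul_abs_sub {g : ℝ → ℝ} {S : Set ℝ} {a b c : ℝ} (hc : 0 ≤ c)
    (hmax : IsMaxOn (fun x => g x - c * |x - a|) S b) {x : ℝ} (hx : x ∈ S) :
    g x ≤ g b + c * |x - b| := by
  have hgx : g x - c * |x - a| ≤ g b - c * |b - a| := hmax hx
  have htri : c * |x - a| ≤ c * (|x - b| + |b - a|) :=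
    mul_le_mul_of_nonneg_left (abs_sub_le x b a) hc
  linarith

theorem local_perturbation_construction_general
    (ψ f : ℝ → ℝ) (δ : ℝ) (hδ : 0 < δ ∧ δ < 1)
    (hψ : LipschitzOnWith 1 ψ (Set.Icc (0:ℝ) 1))
    (hf : LipschitzOnWith (Real.toNNReal (1 - δ)) f (Set.Icc (0:ℝ) 1))
    (xstar : ℝ)
    (xt : ℝ) (hxt : xt ∈ Set.Icc (0:ℝ) 1)
    (hmax : ∀ x ∈ Set.Icc (0:ℝ) 1,
      ψ x - f x - (δ/2) * |x - xstar| ≤ ψ xt - f xt - (δ/2) * |xt - xstar|)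
    (s : ℝ) (hs : 0 < s)
    (h : ℝ → ℝ)
    (hh : h = fun x => ψ xt - f xt + δ * |x - xt| + f x - s / 2) :
    LipschitzOnWith 1 h (Set.Icc (0:ℝ) 1) ∧
      h xt < ψ xt ∧
      (∀ x ∈ Set.Icc (0:ℝ) 1, s / δ ≤ |x - xt| → ψ x ≤ h x) ∧
      (∀ x ∈ Set.Icc (0:ℝ) 1, s / 2 - 2 * |x - xt| ≤ ψ x - h x) := by
  subst hh
  obtain ⟨hδ0, hδ1⟩ := hδ
  refine ⟨lipschitzOnWith_add_mul_abs_sub hδ0.le hδ1.le hf _ _ _, by simpa using hs, ?_, ?_⟩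
  · intro x hx hfar
    have hpen : ψ x - f x ≤ ψ xt - f xt + δ / 2 * |x - xt| :=
      IsMaxOn.le_add_mul_abs_sub (g := fun x => ψ x - f x) (by linarith) (isMaxOn_iff.2 hmax) hx
    have hsδ : s ≤ δ * |x - xt| := (div_le_iff₀' hδ0).1 hfar
    dsimp only
    linarith
  · intro x hx
    have hψx : |ψ x - ψ xt| ≤ |x - xt| := by
      simpa [Real.dist_eq] using hψ.dist_le_mul x hx xt hxt
    have hfx : |f x - f xt| ≤ (1 - δ) * |x - xt| := by
      simpa [Real.dist_eq, Real.coe_toNNReal _ (sub_nonneg.2 hδ1.le)] using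
        hf.dist_le_mul x hx xt hxt
    dsimp only
    linarith [neg_abs_le (ψ x - ψ xt), le_abs_self (f x - f xt)]

/-- Key local-perturbation construction: with `ψ ∈ Lip(1)`, `f ∈ Lip(1−δ)`,
a maximizer `xt` of `x ↦ ψ(x) − f(x) − (δ/2)|x − x*|` satisfying
`ψ(xt) − f(xt) > s/2`, the function
`h(x) = ψ(xt) − f(xt) + δ|x − xt| + f(x) − s/2` is 1-Lipschitz,
lies strictly below `ψ` at `xt`, dominates `ψ` for `|x − xt| ≥ s/δ`,
and satisfies `ψ(x) − h(x) ≥ s/2 − 2|x − xt|` on `[0,1]`. -/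
theorem local_perturbation_construction
    (ψ f : ℝ → ℝ) (δ : ℝ) (hδ : 0 < δ ∧ δ < 1)
    (hψ : LipschitzOnWith 1 ψ (Set.Icc (0:ℝ) 1))
    (hf : LipschitzOnWith (Real.toNNReal (1 - δ)) f (Set.Icc (0:ℝ) 1))
    (xstar : ℝ) (hxstar : xstar ∈ Set.Icc (0:ℝ) 1)
    (xt : ℝ) (hxt : xt ∈ Set.Icc (0:ℝ) 1)
    (hmax : ∀ x ∈ Set.Icc (0:ℝ) 1,
      ψ x - f x - (δ/2) * |x - xstar| ≤ ψ xt - f xt - (δ/2) * |xt - xstar|)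
    (s : ℝ) (hs : 0 < s) (hgap : s / 2 < ψ xt - f xt)
    (h : ℝ → ℝ)
    (hh : h = fun x => ψ xt - f xt + δ * |x - xt| + f x - s / 2) :
    LipschitzOnWith 1 h (Set.Icc (0:ℝ) 1) ∧
      h xt < ψ xt ∧
      (∀ x ∈ Set.Icc (0:ℝ) 1, s / δ ≤ |x - xt| → ψ x ≤ h x) ∧
      (∀ x ∈ Set.Icc (0:ℝ) 1, s / 2 - 2 * |x - xt| ≤ ψ x - h x) :=
  local_perturbation_construction_general ψ f δ hδ hψ hf xstar xt hxt hmax s hs h hh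
end

section
/- Let P be a probability distribution on [0,1] with Lebesgue density and spread function t_n. Then for any nonnegative measurable function q on [0,1], ∫_0^1 t_n(y)² q(y) dy ≤ 4 ∫_0^1 t_n(x) · Q([x − t_n(x), x + t_n(x)]) dx, where Q(A) := ∫_{A∩[0,1]} q(y) dy. -/
open MeasureTheory Set
open scoped ENNReal NNReal

/-- Rewriting the weighted integral of the squared spread function:
`∫₀¹ t_n(y)² q(y) dy ≤ 4 ∫₀¹ t_n(x) Q([x ± t_n(x)]) dx`, where
`Q(A) = ∫_{A∩[0,1]} q`. -/
theorem spread_function_weighted_integral_bound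
    (P : Measure ℝ) [IsProbabilityMeasure P]
    (hac : P ≪ volume) (hsupp : P (Set.Icc (0:ℝ) 1) = 1)
    (n : ℕ) (hn : 1 < n) (t : ℝ → ℝ)
    (ht_pos : ∀ x ∈ Set.Icc (0:ℝ) 1, 0 < t x)
    (ht_eq : ∀ x ∈ Set.Icc (0:ℝ) 1,
      (t x) ^ 2 * (P (Set.Icc (x - t x) (x + t x))).toReal = Real.log n / n)
    (q : ℝ → ℝ) (hq_meas : Measurable q) (hq_nonneg : ∀ y, 0 ≤ q y) :
    ∫ y in Set.Icc (0:ℝ) 1, (t y) ^ 2 * q y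
      ≤ 4 * ∫ x in Set.Icc (0:ℝ) 1,
          t x * ∫ y in Set.Icc (x - t x) (x + t x) ∩ Set.Icc (0:ℝ) 1, q y := by
  set A : Set ℝ := Set.Icc (0:ℝ) 1 with hA
  set c : ℝ := Real.log n / n with hcdef
  have hn0 : (0:ℝ) < n := by positivity
  have hn1 : (1:ℝ) < n := by exact_mod_cast hn
  have hc : 0 < c := div_pos (Real.log_pos hn1) hn0
  have hc1 : c < 1 := by
    rw [hcdef, div_lt_one hn0]
    calc Real.log n < n - 1 := by
          have := Real.log_lt_sub_one_of_pos hn0 (by linarith)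
          linarith
      _ < n := by linarith
  have hple : ∀ s : Set ℝ, (P s).toReal ≤ 1 := by
    intro s
    have : P s ≤ 1 := prob_le_one
    simpa using ENNReal.toReal_mono ENNReal.one_ne_top this
  have htlt : ∀ x ∈ A, t x < 1 := by
    intro x hx
    by_contra h
    push_neg at h
    have hsub : A ⊆ Set.Icc (x - t x) (x + t x) := by
      intro z hz
      obtain ⟨hz0, hz1⟩ := hz
      obtain ⟨hx0, hx1⟩ := hx
      constructor
      · linarith
      · linarith
    have h1 : P (Set.Icc (x - t x) (x + t x)) = 1 := by
      refine le_antisymm prob_le_one ?_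
      calc (1:ℝ≥0∞) = P A := hsupp.symm
        _ ≤ P _ := measure_mono hsub
    have h2 := ht_eq x hx
    rw [h1] at h2
    simp only [ENNReal.toReal_one, mul_one] at h2
    nlinarith
  have htsq : ∀ x ∈ A, c ≤ t x ^ 2 := by
    intro x hx
    calc c = t x ^ 2 * (P (Set.Icc (x - t x) (x + t x))).toReal := (ht_eq x hx).symm
      _ ≤ t x ^ 2 * 1 := by
          have := hple (Set.Icc (x - t x) (x + t x))
          nlinarith [sq_nonneg (t x)]
      _ = t x ^ 2 := mul_one _
  have hppos : ∀ x ∈ A, 0 < (P (Set.Icc (x - t x) (x + t x))).toReal := by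
    intro x hx
    rcases lt_or_eq_of_le (ENNReal.toReal_nonneg (a := P (Set.Icc (x - t x) (x + t x)))) with h | h
    · exact h
    · exfalso
      have h2 := ht_eq x hx
      rw [← h] at h2
      simp at h2
      nlinarith
  have hlip : ∀ x ∈ A, ∀ y ∈ A, t y ≤ t x + |y - x| := by
    intro x hx y hy
    by_contra h
    push_neg at h
    have htx : 0 < t x := ht_pos x hx
    have hsub : Set.Icc (x - t x) (x + t x) ⊆ Set.Icc (y - t y) (y + t y) := by
      intro z hz
      obtain ⟨h1, h2⟩ := hz
      have := abs_lt.mp (show |y - x| < t y - t x by linarith)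
      constructor <;> linarith [this.1, this.2]
    have hmono : (P (Set.Icc (x - t x) (x + t x))).toReal
        ≤ (P (Set.Icc (y - t y) (y + t y))).toReal := by
      refine ENNReal.toReal_mono ?_ (measure_mono hsub)
      exact (measure_lt_top P _).ne
    have h1 := ht_eq x hx
    have h2 := ht_eq y hy
    have hpx := hppos x hx
    have habs : 0 ≤ |y - x| := abs_nonneg _
    have hsq : t x ^ 2 < t y ^ 2 := by nlinarith
    nlinarith [hmono, hpx]
  -- continuity of t on A via Lipschitz, and global extension g
  have htnn : ∀ x ∈ A, 0 ≤ t x := fun x hx => (ht_pos x hx).le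
  set g : ℝ → ℝ := fun x => t (max 0 (min x 1)) with hgdef
  have hmemA : ∀ x : ℝ, max 0 (min x 1) ∈ A := by
    intro x
    constructor
    · exact le_max_left _ _
    · exact max_le (by norm_num) (min_le_right _ _)
  have hg_eq : ∀ x ∈ A, g x = t x := by
    intro x hx
    simp only [hgdef]
    rw [min_eq_left hx.2, max_eq_right hx.1]
  have ht_cont : ContinuousOn t A := by
    have : LipschitzOnWith 1 t A := by
      rw [lipschitzOnWith_iff_dist_le_mul]
      intro x hx y hy
      rw [Real.dist_eq, Real.dist_eq, NNReal.coe_one, one_mul, abs_sub_le_iff]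
      constructor
      · have h := hlip y hy x hx
        linarith
      · have h := hlip x hx y hy
        rw [abs_sub_comm y x] at h
        linarith
    exact this.continuousOn
  have hg_cont : Continuous g := by
    apply ht_cont.comp_continuous
    · exact continuous_const.max (continuous_id.min continuous_const)
    · exact hmemA
  -- key geometric fact
  have hkey : ∀ y ∈ A, ∀ x : ℝ, x ∈ A → |x - y| ≤ t y / 2 →
      t y ≤ 2 * t x ∧ y ∈ Set.Icc (x - t x) (x + t x) := by
    intro y hy x hx hxy
    have h1 : t y ≤ t x + |y - x| := hlip x hx y hy
    rw [abs_sub_comm] at h1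
    have hty2 : t y ≤ 2 * t x := by linarith [le_trans (abs_nonneg (x - y)) (le_trans le_rfl hxy), hxy]
    have h3 : |x - y| ≤ t x := by
      have : t y / 2 ≤ t x := by linarith
      linarith
    have h4 := abs_le.mp h3
    exact ⟨hty2, ⟨by linarith [h4.2], by linarith [h4.1]⟩⟩
  have hAmeas : MeasurableSet A := measurableSet_Icc
  set μ : Measure ℝ := volume.restrict A with hμ
  -- lower bound on restricted volume of the half-interval
  have hvol : ∀ y ∈ A, ENNReal.ofReal (t y) ≤ 2 * μ (Set.Icc (y - t y / 2) (y + t y / 2)) := by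
    intro y hy
    have hty := ht_pos y hy
    have hty1 := htlt y hy
    obtain ⟨a, ha⟩ : ∃ a, Set.Icc a (a + t y / 2) ⊆ Set.Icc (y - t y / 2) (y + t y / 2) ∩ A := by
      obtain ⟨hy0, hy1⟩ := hy
      rcases le_or_gt y (1/2) with h | h
      · refine ⟨y, fun z hz => ?_⟩
        obtain ⟨hz1, hz2⟩ := hz
        exact ⟨⟨by linarith, by linarith⟩, ⟨by linarith, by linarith⟩⟩
      · refine ⟨y - t y / 2, fun z hz => ?_⟩
        obtain ⟨hz1, hz2⟩ := hz
        exact ⟨⟨by linarith, by linarith⟩, ⟨by linarith, by linarith⟩⟩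
    have h2 : ENNReal.ofReal (t y / 2) ≤ μ (Set.Icc (y - t y / 2) (y + t y / 2)) := by
      rw [hμ, Measure.restrict_apply measurableSet_Icc]
      calc ENNReal.ofReal (t y / 2) = volume (Set.Icc a (a + t y / 2)) := by
            rw [Real.volume_Icc]
            congr 1
            ring
        _ ≤ _ := measure_mono ha
    calc ENNReal.ofReal (t y) = 2 * ENNReal.ofReal (t y / 2) := by
          rw [show ((2:ℝ≥0∞)) = ENNReal.ofReal (2:ℝ) by norm_num,
            ← ENNReal.ofReal_mul (by norm_num : (0:ℝ) ≤ 2)]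
          congr 1
          ring
      _ ≤ 2 * μ (Set.Icc (y - t y / 2) (y + t y / 2)) := mul_le_mul_right h2 2
  -- two-variable measurable kernel
  set S : Set (ℝ × ℝ) := {p : ℝ × ℝ | |p.2 - p.1| ≤ g p.1 / 2} with hSdef
  have hS_meas : MeasurableSet S := by
    have hcont : Continuous fun p : ℝ × ℝ => g p.1 / 2 - |p.2 - p.1| := by
      apply Continuous.sub
      · exact (hg_cont.comp continuous_fst).div_const 2
      · exact (continuous_snd.sub continuous_fst).abs
    have h := isClosed_le (continuous_const : Continuous fun _ : ℝ × ℝ => (0:ℝ)) hcont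
    have : S = {p : ℝ × ℝ | (0:ℝ) ≤ g p.1 / 2 - |p.2 - p.1|} := by
      ext p
      simp only [hSdef, Set.mem_setOf_eq]
      constructor <;> intro hh <;> linarith
    rw [this]
    exact h.measurableSet
  set F : ℝ × ℝ → ℝ≥0∞ := fun p => S.indicator (fun p => ENNReal.ofReal (g p.1 * q p.1)) p
    with hFdef
  have hF_meas : Measurable F := by
    apply Measurable.indicator _ hS_meas
    exact ENNReal.measurable_ofReal.comp
      (((hg_cont.comp continuous_fst).measurable).mul (hq_meas.comp measurable_fst))
  -- the main lintegral inequality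
  have main : (∫⁻ y in A, ENNReal.ofReal (t y ^ 2 * q y) ∂volume)
      ≤ 4 * ∫⁻ x in A, ENNReal.ofReal (t x) *
          ∫⁻ y in Set.Icc (x - t x) (x + t x) ∩ A, ENNReal.ofReal (q y) ∂volume ∂volume := by
    have step1 : (∫⁻ y in A, ENNReal.ofReal (t y ^ 2 * q y) ∂volume)
        ≤ 2 * ∫⁻ y in A, ∫⁻ x in A, F (y, x) ∂volume ∂volume := by
      rw [← lintegral_const_mul' 2 _ (by norm_num : (2:ℝ≥0∞) ≠ ⊤)]
      apply setLIntegral_mono' hAmeas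
      intro y hy
      have hFy : ∀ x, F (y, x)
          = (Set.Icc (y - t y / 2) (y + t y / 2)).indicator
              (fun _ => ENNReal.ofReal (t y * q y)) x := by
        intro x
        by_cases h : x ∈ Set.Icc (y - t y / 2) (y + t y / 2)
        · have h' : (y, x) ∈ S := by
            simp only [hSdef, Set.mem_setOf_eq]
            rw [hg_eq y hy, abs_le]
            exact ⟨by linarith [h.1], by linarith [h.2]⟩
          rw [hFdef]
          simp only []
          rw [Set.indicator_of_mem h', Set.indicator_of_mem h, hg_eq y hy]
        · have h' : (y, x) ∉ S := by
            simp only [hSdef, Set.mem_setOf_eq]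
            rw [hg_eq y hy]
            intro hcon
            obtain ⟨hc1, hc2⟩ := abs_le.mp hcon
            exact h ⟨by linarith, by linarith⟩
          rw [hFdef]
          simp only []
          rw [Set.indicator_of_notMem h', Set.indicator_of_notMem h]
      have hFint : (∫⁻ x in A, F (y, x) ∂volume)
          = ENNReal.ofReal (t y * q y) * μ (Set.Icc (y - t y / 2) (y + t y / 2)) := by
        rw [hμ, lintegral_congr hFy]
        exact lintegral_indicator_const measurableSet_Icc _
      calc ENNReal.ofReal (t y ^ 2 * q y)
          = ENNReal.ofReal (t y) * ENNReal.ofReal (t y * q y) := by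
            rw [← ENNReal.ofReal_mul (htnn y hy)]
            congr 1
            ring
        _ ≤ (2 * μ (Set.Icc (y - t y / 2) (y + t y / 2))) * ENNReal.ofReal (t y * q y) :=
            mul_le_mul_left (hvol y hy) _
        _ = 2 * ∫⁻ x in A, F (y, x) ∂volume := by
            rw [hFint]
            ring
    have hswap : (∫⁻ y in A, ∫⁻ x in A, F (y, x) ∂volume ∂volume)
        = ∫⁻ x in A, ∫⁻ y in A, F (y, x) ∂volume ∂volume :=
      lintegral_lintegral_swap hF_meas.aemeasurable
    have step3 : (∫⁻ x in A, ∫⁻ y in A, F (y, x) ∂volume ∂volume)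
        ≤ ∫⁻ x in A, 2 * (ENNReal.ofReal (t x) *
            ∫⁻ y in Set.Icc (x - t x) (x + t x) ∩ A, ENNReal.ofReal (q y) ∂volume) ∂volume := by
      apply setLIntegral_mono' hAmeas
      intro x hx
      have hptwise : ∀ y ∈ A, F (y, x)
          ≤ (Set.Icc (x - t x) (x + t x)).indicator
              (fun y => ENNReal.ofReal (2 * t x * q y)) y := by
        intro y hy
        by_cases h : (y, x) ∈ S
        · have hS' : |x - y| ≤ t y / 2 := by
            have h2 := h
            simp only [hSdef, Set.mem_setOf_eq] at h2
            rwa [hg_eq y hy] at h2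
          obtain ⟨h1, h2⟩ := hkey y hy x hx hS'
          rw [hFdef]
          simp only []
          rw [Set.indicator_of_mem h, Set.indicator_of_mem h2]
          apply ENNReal.ofReal_le_ofReal
          rw [hg_eq y hy]
          nlinarith [hq_nonneg y]
        · rw [hFdef]
          simp only []
          rw [Set.indicator_of_notMem h]
          exact zero_le
      calc (∫⁻ y in A, F (y, x) ∂volume)
          ≤ ∫⁻ y in A, (Set.Icc (x - t x) (x + t x)).indicator
              (fun y => ENNReal.ofReal (2 * t x * q y)) y ∂volume :=
            setLIntegral_mono' hAmeas hptwise
        _ = ∫⁻ y in Set.Icc (x - t x) (x + t x) ∩ A, ENNReal.ofReal (2 * t x * q y) ∂volume := by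
            rw [lintegral_indicator measurableSet_Icc,
              Measure.restrict_restrict measurableSet_Icc]
        _ = 2 * (ENNReal.ofReal (t x) *
              ∫⁻ y in Set.Icc (x - t x) (x + t x) ∩ A, ENNReal.ofReal (q y) ∂volume) := by
            have hc2 : ∀ y, ENNReal.ofReal (2 * t x * q y)
                = (2 * ENNReal.ofReal (t x)) * ENNReal.ofReal (q y) := by
              intro y
              rw [show 2 * t x * q y = 2 * (t x * q y) by ring,
                ENNReal.ofReal_mul (by norm_num : (0:ℝ) ≤ 2),
                ENNReal.ofReal_mul (htnn x hx),
                show ENNReal.ofReal (2:ℝ) = 2 by norm_num]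
              ring
            rw [lintegral_congr hc2,
              lintegral_const_mul' (2 * ENNReal.ofReal (t x)) _
                (ENNReal.mul_ne_top (by norm_num) ENNReal.ofReal_ne_top)]
            ring
    calc (∫⁻ y in A, ENNReal.ofReal (t y ^ 2 * q y) ∂volume)
        ≤ 2 * ∫⁻ y in A, ∫⁻ x in A, F (y, x) ∂volume ∂volume := step1
      _ = 2 * ∫⁻ x in A, ∫⁻ y in A, F (y, x) ∂volume ∂volume := by rw [hswap]
      _ ≤ 2 * ∫⁻ x in A, 2 * (ENNReal.ofReal (t x) *
            ∫⁻ y in Set.Icc (x - t x) (x + t x) ∩ A, ENNReal.ofReal (q y) ∂volume) ∂volume :=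
          mul_le_mul_right step3 2
      _ = 4 * ∫⁻ x in A, ENNReal.ofReal (t x) *
            ∫⁻ y in Set.Icc (x - t x) (x + t x) ∩ A, ENNReal.ofReal (q y) ∂volume ∂volume := by
          rw [lintegral_const_mul' 2 _ (by norm_num : (2:ℝ≥0∞) ≠ ⊤), ← mul_assoc]
          norm_num
  -- measurability of x ↦ ∫⁻ q over the window (with the continuous extension g)
  have hQmeas : Measurable fun x =>
      ∫⁻ y in Set.Icc (x - g x) (x + g x) ∩ A, ENNReal.ofReal (q y) ∂volume := by
    have hGmeas : Measurable fun p : ℝ × ℝ =>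
        (Set.Icc (p.1 - g p.1) (p.1 + g p.1)).indicator (fun y => ENNReal.ofReal (q y)) p.2 := by
      have hrw : (fun p : ℝ × ℝ =>
          (Set.Icc (p.1 - g p.1) (p.1 + g p.1)).indicator (fun y => ENNReal.ofReal (q y)) p.2)
          = Set.indicator {p : ℝ × ℝ | p.1 - g p.1 ≤ p.2 ∧ p.2 ≤ p.1 + g p.1}
              (fun p => ENNReal.ofReal (q p.2)) := by
        ext p
        simp [Set.indicator_apply, Set.mem_Icc, Set.mem_setOf_eq]
      rw [hrw]
      apply Measurable.indicator
      · exact ENNReal.measurable_ofReal.comp (hq_meas.comp measurable_snd)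
      · apply MeasurableSet.inter
        · exact (isClosed_le (continuous_fst.sub (hg_cont.comp continuous_fst)) continuous_snd).measurableSet
        · exact (isClosed_le continuous_snd (continuous_fst.add (hg_cont.comp continuous_fst))).measurableSet
    have heq : ∀ x, (∫⁻ y in Set.Icc (x - g x) (x + g x) ∩ A, ENNReal.ofReal (q y) ∂volume)
        = ∫⁻ y, (Set.Icc (x - g x) (x + g x)).indicator (fun y => ENNReal.ofReal (q y)) y ∂μ := by
      intro x
      rw [hμ, ← Measure.restrict_restrict measurableSet_Icc,
        lintegral_indicator measurableSet_Icc]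
    simp_rw [heq]
    exact hGmeas.lintegral_prod_right'
  by_cases hqint : IntegrableOn q A volume
  · -- q integrable: full conversion
    have hMfin : (∫⁻ y in A, ENNReal.ofReal (q y) ∂volume) < ⊤ := by
      have h2 : (∫⁻ y in A, ENNReal.ofReal (q y) ∂volume)
          = ∫⁻ y in A, (‖q y‖₊ : ℝ≥0∞) ∂volume :=
        lintegral_congr fun y => (Real.enorm_eq_ofReal (hq_nonneg y)).symm
      rw [h2]
      exact hqint.2
    have hQle : ∀ s : Set ℝ, (∫⁻ y in s ∩ A, ENNReal.ofReal (q y) ∂volume)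
        ≤ ∫⁻ y in A, ENNReal.ofReal (q y) ∂volume := fun s =>
      lintegral_mono' (Measure.restrict_mono Set.inter_subset_right le_rfl) le_rfl
    have hinner : ∀ x : ℝ, (∫ y in Set.Icc (x - t x) (x + t x) ∩ A, q y)
        = (∫⁻ y in Set.Icc (x - t x) (x + t x) ∩ A, ENNReal.ofReal (q y) ∂volume).toReal := by
      intro x
      rw [integral_eq_lintegral_of_nonneg_ae (ae_of_all _ hq_nonneg)
        hq_meas.aestronglyMeasurable]
    have hLHS : (∫ y in A, t y ^ 2 * q y)
        = (∫⁻ y in A, ENNReal.ofReal (t y ^ 2 * q y) ∂volume).toReal := by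
      rw [integral_eq_lintegral_of_nonneg_ae]
      · filter_upwards [ae_restrict_mem hAmeas] with y hy
        exact mul_nonneg (sq_nonneg _) (hq_nonneg y)
      · refine (((hg_cont.measurable.pow_const 2).mul hq_meas).aestronglyMeasurable).congr ?_
        rw [Filter.EventuallyEq, ae_restrict_iff' hAmeas]
        exact ae_of_all _ fun y hy => by simp only [Pi.mul_apply]; rw [hg_eq y hy]
    have hRHS : (∫ x in A, t x * ∫ y in Set.Icc (x - t x) (x + t x) ∩ A, q y)
        = (∫⁻ x in A, ENNReal.ofReal (t x) *
            ∫⁻ y in Set.Icc (x - t x) (x + t x) ∩ A, ENNReal.ofReal (q y) ∂volume ∂volume).toReal := by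
      rw [integral_eq_lintegral_of_nonneg_ae]
      rotate_left
      · filter_upwards [ae_restrict_mem hAmeas] with x hx
        refine mul_nonneg (htnn x hx) ?_
        exact setIntegral_nonneg (measurableSet_Icc.inter hAmeas) fun y _ => hq_nonneg y
      · refine ((hg_cont.measurable.mul hQmeas.ennreal_toReal).aestronglyMeasurable).congr ?_
        rw [Filter.EventuallyEq, ae_restrict_iff' hAmeas]
        refine ae_of_all _ fun x hx => ?_
        simp only [Pi.mul_apply]
        rw [hg_eq x hx, hinner x]
      congr 1
      apply setLIntegral_congr_fun hAmeas
      intro x hx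
      simp only []
      rw [hinner x, ENNReal.ofReal_mul (htnn x hx),
        ENNReal.ofReal_toReal (lt_of_le_of_lt (hQle _) hMfin).ne]
    rw [hLHS, hRHS]
    have h4R : (4:ℝ≥0∞) * (∫⁻ x in A, ENNReal.ofReal (t x) *
        ∫⁻ y in Set.Icc (x - t x) (x + t x) ∩ A, ENNReal.ofReal (q y) ∂volume ∂volume) ≠ ⊤ := by
      apply ENNReal.mul_ne_top (by norm_num)
      have hRle : (∫⁻ x in A, ENNReal.ofReal (t x) *
          ∫⁻ y in Set.Icc (x - t x) (x + t x) ∩ A, ENNReal.ofReal (q y) ∂volume ∂volume)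
          ≤ ∫⁻ _x in A, (∫⁻ y in A, ENNReal.ofReal (q y) ∂volume) ∂volume := by
        apply setLIntegral_mono' hAmeas
        intro x hx
        calc ENNReal.ofReal (t x) *
            ∫⁻ y in Set.Icc (x - t x) (x + t x) ∩ A, ENNReal.ofReal (q y) ∂volume
            ≤ 1 * ∫⁻ y in A, ENNReal.ofReal (q y) ∂volume :=
              mul_le_mul' (ENNReal.ofReal_le_one.mpr (htlt x hx).le) (hQle _)
          _ = _ := one_mul _
      refine (lt_of_le_of_lt hRle ?_).ne
      rw [lintegral_const, Measure.restrict_apply MeasurableSet.univ, Set.univ_inter]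
      calc (∫⁻ y in A, ENNReal.ofReal (q y) ∂volume) * volume A
          ≤ (∫⁻ y in A, ENNReal.ofReal (q y) ∂volume) * 1 := by
            apply mul_le_mul_right
            rw [hA, Real.volume_Icc]
            norm_num
        _ < ⊤ := by rw [mul_one]; exact hMfin
    calc (∫⁻ y in A, ENNReal.ofReal (t y ^ 2 * q y) ∂volume).toReal
        ≤ ((4:ℝ≥0∞) * ∫⁻ x in A, ENNReal.ofReal (t x) *
            ∫⁻ y in Set.Icc (x - t x) (x + t x) ∩ A, ENNReal.ofReal (q y) ∂volume ∂volume).toReal :=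
          ENNReal.toReal_mono h4R main
      _ = 4 * (∫⁻ x in A, ENNReal.ofReal (t x) *
            ∫⁻ y in Set.Icc (x - t x) (x + t x) ∩ A, ENNReal.ofReal (q y) ∂volume ∂volume).toReal := by
          rw [ENNReal.toReal_mul]
          norm_num
  · -- q not integrable: LHS is the integral of a non-integrable function, hence 0
    have hL0 : (∫ y in A, t y ^ 2 * q y) = 0 := by
      apply integral_undef
      intro hcon
      apply hqint
      have hint2 : IntegrableOn (fun y => c⁻¹ * (t y ^ 2 * q y)) A volume := hcon.const_mul _
      refine Integrable.mono' hint2 hq_meas.aestronglyMeasurable ?_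
      rw [ae_restrict_iff' hAmeas]
      refine ae_of_all _ fun y hy => ?_
      rw [Real.norm_eq_abs, abs_of_nonneg (hq_nonneg y)]
      have h1 := htsq y hy
      have h2 := hq_nonneg y
      have h3 : c * q y ≤ t y ^ 2 * q y := mul_le_mul_of_nonneg_right h1 h2
      calc q y = c⁻¹ * (c * q y) := by field_simp
        _ ≤ c⁻¹ * (t y ^ 2 * q y) :=
            mul_le_mul_of_nonneg_left h3 (by positivity)
    rw [hL0]
    have hpos : 0 ≤ ∫ x in A, t x * ∫ y in Set.Icc (x - t x) (x + t x) ∩ A, q y := by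
      apply setIntegral_nonneg hAmeas
      intro x hx
      refine mul_nonneg (htnn x hx) ?_
      exact setIntegral_nonneg (measurableSet_Icc.inter hAmeas) fun y _ => hq_nonneg y
    linarith
end
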